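/- Let m ≥ 2 be an integer. In ℂ[x_0,x_1,x_2,y_0,y_1,y_2], the kernel of the linear map x_0·∂/∂y_0 + x_1·∂/∂y_1 restricted to V_{m−1,m−2} (mapping into V_{m,m−3}) has ℂ-dimension at least Σ_{K=0}^{m−2} C(m+1−K, 2), where C(·,·) denotes the binomial coefficient. In particular, this kernel dimension grows at least like a positive constant times m^3 as m → ∞. -/

import Mathlib

open MvPolynomial

/-- The space of bihomogeneous polynomials of bidegree `(a, b)` in
`ℂ[x_0,x_1,x_2,y_0,y_1,y_2]`, with `x`-variables indexed by `Sum.inl` and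
`y`-variables indexed by `Sum.inr`. -/
noncomputable def Vab (a b : ℕ) : Submodule ℂ (MvPolynomial (Fin 3 ⊕ Fin 3) ℂ) :=
  weightedHomogeneousSubmodule ℂ
    (Sum.elim (fun _ => ((1 : ℕ), (0 : ℕ))) (fun _ => ((0 : ℕ), (1 : ℕ)))) (a, b)

/-- The operator `x_0·∂/∂y_0 + x_1·∂/∂y_1` on `ℂ[x_0,x_1,x_2,y_0,y_1,y_2]`. -/
noncomputable def Tsing : Module.End ℂ (MvPolynomial (Fin 3 ⊕ Fin 3) ℂ) :=
  (LinearMap.mulLeft ℂ (X (Sum.inl 0))).comp (pderiv (Sum.inr 0)).toLinearMap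
    + (LinearMap.mulLeft ℂ (X (Sum.inl 1))).comp (pderiv (Sum.inr 1)).toLinearMap

/-!
`Tsing` is a derivation, and it kills `x₀, x₁, x₂`, `y₂` and the minor `Δ = x₀y₁ - x₁y₀`.
Hence every `xᵉ · y₂^(m-2-K) · Δ^K` with `|e| = m - 1 - K` lies in the kernel on `V_{m-1,m-2}`.
Setting `y₀ = 0` sends these polynomials to the pairwise distinct monomials
`xᵉ · x₀^K · y₁^K · y₂^(m-2-K)`, so they are linearly independent; for each `K` there are
`C(m+1-K, 2)` choices of `e`. By the hockey-stick identity the total is `C(m+2, 3) - 1 ≥ m³/6`.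
-/

open Finset Finsupp

local notation "𝓡" => MvPolynomial (Fin 3 ⊕ Fin 3) ℂ

theorem LinearIndependent.card_le_finrank_ker {K V W ι : Type*} [DivisionRing K]
    [AddCommGroup V] [Module K V] [AddCommGroup W] [Module K W] [FiniteDimensional K V]
    [Fintype ι] {v : ι → V} (hv : LinearIndependent K v) (g : V →ₗ[K] W)
    (hg : ∀ i, g (v i) = 0) : Fintype.card ι ≤ Module.finrank K (LinearMap.ker g) :=
  LinearIndependent.fintype_card_le_finrank (b := fun i => (⟨v i, hg i⟩ : LinearMap.ker g))
    (.of_comp (LinearMap.ker g).subtype hv)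

theorem Finsupp.weight_mapDomain {σ τ M : Type*} [AddCommMonoid M] (f : σ → τ) (w : τ → M)
    (d : σ →₀ ℕ) : weight w (d.mapDomain f) = weight (w ∘ f) d := by
  simp [weight_apply, sum_mapDomain_index, add_smul]

theorem Finsupp.weight_const {σ M : Type*} [AddCommMonoid M] (c : M) (d : σ →₀ ℕ) :
    weight (fun _ => c) d = d.degree • c := by
  rw [weight_apply, degree_apply, Finsupp.sum, Finset.sum_smul]

theorem MvPolynomial.IsWeightedHomogeneous.map_weight {σ R M N : Type*} [CommSemiring R]
    [AddCommMonoid M] [AddCommMonoid N] {w : σ → M} {φ : MvPolynomial σ R} {m : M}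
    (h : φ.IsWeightedHomogeneous w m) (f : M →+ N) : φ.IsWeightedHomogeneous (f ∘ w) (f m) :=
  fun d hd => by
    rw [← h hd, weight_apply, weight_apply, map_finsuppSum]
    simp

theorem Vab_le_homogeneousSubmodule (a b : ℕ) :
    Vab a b ≤ homogeneousSubmodule (Fin 3 ⊕ Fin 3) ℂ (a + b) := fun p hp => by
  have h := ((mem_weightedHomogeneousSubmodule ..).mp hp).map_weight
    (AddMonoidHom.fst ℕ ℕ + AddMonoidHom.snd ℕ ℕ)
  change IsWeightedHomogeneous 1 p (a + b)
  convert h using 1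
  · ext (i | i) <;> rfl
  · rfl

instance (a b : ℕ) : FiniteDimensional ℂ (Vab a b) :=
  have := Module.Finite.iff_fg.mpr (homogeneousSubmodule_fg (σ := Fin 3 ⊕ Fin 3) ℂ (a + b))
  Submodule.finiteDimensional_of_le (Vab_le_homogeneousSubmodule a b)

noncomputable def tsingDerivation : Derivation ℂ 𝓡 𝓡 :=
  (X (Sum.inl 0) : 𝓡) • pderiv (Sum.inr 0) + (X (Sum.inl 1) : 𝓡) • pderiv (Sum.inr 1)

theorem tsingDerivation_apply (p : 𝓡) : tsingDerivation p = Tsing p := by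
  simp [tsingDerivation, Tsing]

noncomputable def xyMinor : 𝓡 := X (Sum.inl 0) * X (Sum.inr 1) - X (Sum.inl 1) * X (Sum.inr 0)

noncomputable def kernelPoly (e : Fin 3 →₀ ℕ) (n K : ℕ) : 𝓡 :=
  rename Sum.inl (monomial e 1) * X (Sum.inr 2) ^ n * xyMinor ^ K

theorem tsingDerivation_rename_inl (q : MvPolynomial (Fin 3) ℂ) :
    tsingDerivation (rename Sum.inl q) = 0 :=
  derivation_eq_zero_of_forall_mem_vars fun s hs => by
    obtain ⟨i, -, rfl⟩ := Finset.mem_image.mp (vars_rename _ _ hs)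
    simp [tsingDerivation, pderiv_X]

theorem tsingDerivation_X_inr_two : tsingDerivation (X (Sum.inr 2)) = 0 := by
  simp [tsingDerivation, pderiv_X]

theorem tsingDerivation_xyMinor : tsingDerivation xyMinor = 0 := by
  simp [tsingDerivation, xyMinor, pderiv_X, mul_comm]

theorem Tsing_kernelPoly (e : Fin 3 →₀ ℕ) (n K : ℕ) : Tsing (kernelPoly e n K) = 0 := by
  rw [← tsingDerivation_apply]
  simp [kernelPoly, tsingDerivation_rename_inl, tsingDerivation_X_inr_two, tsingDerivation_xyMinor]

theorem kernelPoly_mem_Vab (e : Fin 3 →₀ ℕ) (n K : ℕ) :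
    kernelPoly e n K ∈ Vab (e.degree + K) (n + K) := by
  let w : Fin 3 ⊕ Fin 3 → ℕ × ℕ := Sum.elim (fun _ => (1, 0)) (fun _ => (0, 1))
  have hx : (rename Sum.inl (monomial e (1 : ℂ))).IsWeightedHomogeneous w (e.degree, 0) := by
    rw [rename_monomial]
    apply isWeightedHomogeneous_monomial
    rw [weight_mapDomain]
    exact (weight_const (1, 0) e).trans (by simp)
  have hy := (isWeightedHomogeneous_X ℂ w (Sum.inr 2)).pow n
  have hminor : xyMinor.IsWeightedHomogeneous w (1, 1) :=
    ((isWeightedHomogeneous_X ℂ w _).mul (isWeightedHomogeneous_X ℂ w _)).sub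
      ((isWeightedHomogeneous_X ℂ w _).mul (isWeightedHomogeneous_X ℂ w _))
  have h := (hx.mul hy).mul (hminor.pow K)
  simp only [w, Sum.elim_inr, Prod.smul_mk, smul_eq_mul, mul_one, mul_zero, Prod.mk_add_mk,
    add_zero, zero_add] at h
  exact h

noncomputable def substY0Zero : 𝓡 →ₐ[ℂ] 𝓡 := aeval (Function.update X (Sum.inr 0) 0)

noncomputable def kernelExponent (e : Fin 3 →₀ ℕ) (n K : ℕ) : Fin 3 ⊕ Fin 3 →₀ ℕ :=
  e.mapDomain Sum.inl + single (Sum.inr 2) n + single (Sum.inl 0) K + single (Sum.inr 1) K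

theorem substY0Zero_rename_inl (q : MvPolynomial (Fin 3) ℂ) :
    substY0Zero (rename Sum.inl q) = rename Sum.inl q := by
  rw [substY0Zero, aeval_rename, ← aeval_X_left_apply (rename Sum.inl q), aeval_rename]
  congr 1

theorem substY0Zero_kernelPoly (e : Fin 3 →₀ ℕ) (n K : ℕ) :
    substY0Zero (kernelPoly e n K) = monomial (kernelExponent e n K) 1 := by
  have hy : substY0Zero (X (Sum.inr 2)) = X (Sum.inr 2) := by simp [substY0Zero]
  have hminor : substY0Zero xyMinor = X (Sum.inl 0) * X (Sum.inr 1) := by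
    simp [substY0Zero, xyMinor]
  rw [kernelPoly, map_mul, map_mul, map_pow, map_pow, substY0Zero_rename_inl, hy, hminor]
  simp only [rename_monomial, X, monomial_pow, monomial_mul, kernelExponent, one_pow, mul_one,
    smul_add, smul_single_one, add_assoc]

theorem kernelExponent_injective :
    Function.Injective fun t : (Fin 3 →₀ ℕ) × ℕ × ℕ => kernelExponent t.1 t.2.1 t.2.2 := by
  rintro ⟨e, n, K⟩ ⟨e', n', K'⟩ h
  have hinr (d : Fin 3 →₀ ℕ) (j : Fin 3) : d.mapDomain Sum.inl (Sum.inr j) = 0 :=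
    mapDomain_of_notMem_range _ _ (by simp)
  have hK : K = K' := by simpa [kernelExponent, hinr] using DFunLike.congr_fun h (Sum.inr 1)
  have hn : n = n' := by simpa [kernelExponent, hinr] using DFunLike.congr_fun h (Sum.inr 2)
  subst hK hn
  simpa [kernelExponent, mapDomain_injective Sum.inl_injective |>.eq_iff] using h

theorem linearIndependent_kernelPoly :
    LinearIndependent ℂ fun t : (Fin 3 →₀ ℕ) × ℕ × ℕ => kernelPoly t.1 t.2.1 t.2.2 := by
  apply LinearIndependent.of_comp substY0Zero.toLinearMap
  have := (basisMonomials (Fin 3 ⊕ Fin 3) ℂ).linearIndependent.comp _ kernelExponent_injective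
  simpa [Function.comp_def, substY0Zero_kernelPoly] using this

def kernelIndex (m : ℕ) : Finset (Σ _ : ℕ, Fin 3 →₀ ℕ) :=
  (range (m - 1)).sigma fun K => univ.finsuppAntidiag (m - 1 - K)

theorem card_kernelIndex (m : ℕ) :
    #(kernelIndex m) = ∑ K ∈ range (m - 1), (m + 1 - K).choose 2 := by
  rw [kernelIndex, card_sigma]
  refine sum_congr rfl fun K hK => ?_
  have := mem_range.mp hK
  rw [card_finsuppAntidiag_nat_eq_choose, card_univ, Fintype.card_fin,
    show 3 + (m - 1 - K) - 1 = m - 1 - K + 2 by omega, Nat.choose_symm_add]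
  congr 1
  omega

theorem kernelPoly_mem_Vab_of_mem_kernelIndex {m : ℕ} {t : Σ _ : ℕ, Fin 3 →₀ ℕ}
    (ht : t ∈ kernelIndex m) : kernelPoly t.2 (m - 2 - t.1) t.1 ∈ Vab (m - 1) (m - 2) := by
  obtain ⟨K, e⟩ := t
  simp only [kernelIndex, mem_sigma, mem_range, mem_finsuppAntidiag, ← degree_eq_sum] at ht
  convert kernelPoly_mem_Vab e (m - 2 - K) K using 2 <;> omega

theorem linearIndependent_kernelPoly_kernelIndex (m : ℕ) :
    LinearIndependent ℂ fun t : kernelIndex m => kernelPoly t.1.2 (m - 2 - t.1.1) t.1.1 := by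
  have hinj : Function.Injective fun t : kernelIndex m => (t.1.2, m - 2 - t.1.1, t.1.1) := by
    intro t t' h
    simp only [Prod.mk.injEq] at h
    exact Subtype.ext (Sigma.ext h.2.2 (heq_of_eq h.1))
  exact (linearIndependent_kernelPoly.comp _ hinj :)

theorem sum_choose_two_add_one (n : ℕ) :
    ∑ K ∈ range n, (n + 2 - K).choose 2 + 1 = (n + 3).choose 3 := by
  have hreflect : ∑ K ∈ range n, (n + 2 - K).choose 2 = ∑ j ∈ range n, (j + 1 + 2).choose 2 := by
    rw [← sum_range_reflect]
    exact sum_congr rfl fun j hj => by rw [mem_range] at hj; congr 1; omega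
  have hhockey := Nat.sum_range_add_choose n 2
  rw [sum_range_succ'] at hhockey
  rw [hreflect]
  simpa using hhockey

theorem six_mul_choose_three (n : ℕ) : 6 * (n + 2).choose 3 = (n + 2) * (n + 1) * n := by
  rw [show 6 = Nat.factorial 3 from rfl, ← Nat.descFactorial_eq_factorial_mul_choose,
    Nat.succ_descFactorial_succ, Nat.succ_descFactorial_succ, Nat.descFactorial_one, mul_assoc]

theorem cube_le_six_mul_sum_choose_two {m : ℕ} (hm : 2 ≤ m) :
    m ^ 3 ≤ 6 * ∑ K ∈ range (m - 1), (m + 1 - K).choose 2 := by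
  obtain ⟨n, rfl⟩ : ∃ n, m = n + 1 := ⟨m - 1, by omega⟩
  have hsum := sum_choose_two_add_one n
  have hsix := six_mul_choose_three (n + 1)
  simp only [Nat.add_sub_cancel, show n + 1 + 1 = n + 2 by rfl] at hsum hsix ⊢
  nlinarith

/-- The kernel of `x_0·∂/∂y_0 + x_1·∂/∂y_1 : V_{m−1,m−2} → V_{m,m−3}` has dimension at
least `Σ_{K=0}^{m−2} C(m+1−K, 2)`, a quantity growing at least like `c·m^3`. -/
theorem Top_kernel_lower_bound :
    (∀ m : ℕ, 2 ≤ m →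
      ∀ g : (Vab (m - 1) (m - 2)) →ₗ[ℂ] (Vab m (m - 3)),
        (∀ v, (g v : MvPolynomial (Fin 3 ⊕ Fin 3) ℂ)
            = Tsing (v : MvPolynomial (Fin 3 ⊕ Fin 3) ℂ)) →
        ∑ K ∈ Finset.range (m - 1), Nat.choose (m + 1 - K) 2
          ≤ Module.finrank ℂ (LinearMap.ker g)) ∧
    ∃ c : ℝ, 0 < c ∧ ∀ m : ℕ, 2 ≤ m →
      c * (m : ℝ) ^ 3
        ≤ ((∑ K ∈ Finset.range (m - 1), Nat.choose (m + 1 - K) 2 : ℕ) : ℝ) := by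
  refine ⟨fun m _ g hg => ?_, 1 / 6, by norm_num, fun m hm => ?_⟩
  · let v (t : kernelIndex m) : Vab (m - 1) (m - 2) :=
      ⟨kernelPoly t.1.2 (m - 2 - t.1.1) t.1.1, kernelPoly_mem_Vab_of_mem_kernelIndex t.2⟩
    have hv : LinearIndependent ℂ v :=
      .of_comp (Vab (m - 1) (m - 2)).subtype (linearIndependent_kernelPoly_kernelIndex m)
    have hgv (t : kernelIndex m) : g (v t) = 0 :=
      Subtype.ext <| (hg _).trans (Tsing_kernelPoly ..)
    calc ∑ K ∈ range (m - 1), (m + 1 - K).choose 2 = Fintype.card (kernelIndex m) := by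
          rw [Fintype.card_coe, card_kernelIndex]
      _ ≤ Module.finrank ℂ (LinearMap.ker g) := hv.card_le_finrank_ker g hgv
  · have hcube : (m : ℝ) ^ 3 ≤ 6 * ((∑ K ∈ range (m - 1), (m + 1 - K).choose 2 : ℕ) : ℝ) := by
      exact_mod_cast cube_le_six_mul_sum_choose_two hm
    linarith
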